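/- arXiv:1807.05227 — 3 statements merged into one kernel-verified Lean document; each statement's English description precedes it below -/
import Mathlib

section
/- Let m ≥ 2. The Lie subring of M_m(ℍ) generated under the commutator bracket [x,y] = xy − yx by the set of all matrices a·E_{ij} with a ∈ ℍ and i ≠ j equals the set {x ∈ M_m(ℍ) : re(tr x) = 0} of matrices whose trace is a purely imaginary quaternion. -/
/-!
Since `re (a * b) = re (b * a)` in `ℍ`, the real part of the trace vanishes on commutators of
quaternion matrices; this gives one inclusion. Conversely, the bracket of `a E_ij` and `b E_ji` is
`ab E_ii - ba E_jj`. Hence the closure contains every `a E_ii - a E_jj`, so each matrix `x` is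
congruent to `(tr x) E_ii` modulo the closure, and it contains every `(ab - ba) E_ii`. Every purely
imaginary quaternion is a sum of commutators, as `[j, k] = 2i`, `[k, i] = 2j` and `[i, j] = 2k`.
-/

open scoped Quaternion

/-- The smallest additive subgroup containing `s` and closed under the
commutator bracket `x * y - y * x`. -/
def lieClosure {M : Type*} [NonUnitalNonAssocRing M] (s : Set M) : AddSubgroup M :=
  sInf {S : AddSubgroup M | s ⊆ S ∧ ∀ x ∈ S, ∀ y ∈ S, x * y - y * x ∈ S}

section LieClosure

variable {M : Type*} [NonUnitalNonAssocRing M] {s : Set M}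

theorem subset_lieClosure : s ⊆ lieClosure s :=
  fun _ hx => AddSubgroup.mem_sInf.2 fun _ hS => hS.1 hx

theorem mul_sub_mul_mem_lieClosure {x y : M} (hx : x ∈ lieClosure s) (hy : y ∈ lieClosure s) :
    x * y - y * x ∈ lieClosure s :=
  AddSubgroup.mem_sInf.2 fun S hS =>
    hS.2 x (AddSubgroup.mem_sInf.1 hx S hS) y (AddSubgroup.mem_sInf.1 hy S hS)

theorem lieClosure_induction {p : M → Prop} (mem : ∀ x ∈ s, p x) (zero : p 0)
    (add : ∀ x y, p x → p y → p (x + y)) (neg : ∀ x, p x → p (-x))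
    (bracket : ∀ x y, p x → p y → p (x * y - y * x)) {x : M} (hx : x ∈ lieClosure s) : p x :=
  AddSubgroup.mem_sInf.1 hx ⟨⟨⟨{x | p x}, add _ _⟩, zero⟩, neg _⟩
    ⟨mem, fun x hx y hy => bracket x y hx hy⟩

end LieClosure

namespace Quaternion

theorem re_sum {R ι : Type*} [CommRing R] (s : Finset ι) (f : ι → ℍ[R]) :
    (∑ i ∈ s, f i).re = ∑ i ∈ s, (f i).re :=
  map_sum (QuaternionAlgebra.reₗ (-1) 0 (-1)) f s

theorem re_mul_comm {R : Type*} [CommRing R] (a b : ℍ[R]) : (a * b).re = (b * a).re := by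
  simp only [re_mul]
  ring

theorem re_trace_mul_comm {R n : Type*} [CommRing R] [Fintype n] (A B : Matrix n n ℍ[R]) :
    (A * B).trace.re = (B * A).trace.re := by
  simp only [Matrix.trace, Matrix.diag, Matrix.mul_apply]
  rw [Finset.sum_comm]
  simp only [re_sum, re_mul_comm]

theorem mem_closure_commutators_of_re_eq_zero {c : ℍ[ℝ]} (hc : c.re = 0) :
    c ∈ AddSubgroup.closure {z | ∃ a b : ℍ[ℝ], z = a * b - b * a} := by
  have hc' : c =
      ((⟨0, 0, c.imI / 2, 0⟩ : ℍ[ℝ]) * (⟨0, 0, 0, 1⟩ : ℍ[ℝ]) -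
        (⟨0, 0, 0, 1⟩ : ℍ[ℝ]) * (⟨0, 0, c.imI / 2, 0⟩ : ℍ[ℝ])) +
      ((⟨0, 0, 0, c.imJ / 2⟩ : ℍ[ℝ]) * (⟨0, 1, 0, 0⟩ : ℍ[ℝ]) -
        (⟨0, 1, 0, 0⟩ : ℍ[ℝ]) * (⟨0, 0, 0, c.imJ / 2⟩ : ℍ[ℝ])) +
      ((⟨0, c.imK / 2, 0, 0⟩ : ℍ[ℝ]) * (⟨0, 0, 1, 0⟩ : ℍ[ℝ]) -
        (⟨0, 0, 1, 0⟩ : ℍ[ℝ]) * (⟨0, c.imK / 2, 0, 0⟩ : ℍ[ℝ])) := by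
    ext <;> simp [hc]
  rw [hc']
  refine add_mem (add_mem ?_ ?_) ?_ <;> exact AddSubgroup.subset_closure ⟨_, _, rfl⟩

end Quaternion

namespace Matrix

variable {n R : Type*} [Fintype n] [DecidableEq n]

variable (n R) in
def offDiagSingles [Zero R] : Set (Matrix n n R) :=
  {x | ∃ (a : R) (i j : n), i ≠ j ∧ x = single i j a}

section Ring

variable [Ring R]

theorem single_mem_lieClosure_offDiagSingles {i j : n} (h : i ≠ j) (a : R) :
    single i j a ∈ lieClosure (offDiagSingles n R) :=
  subset_lieClosure ⟨a, i, j, h, rfl⟩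

theorem single_sub_single_mem_lieClosure_offDiagSingles (a : R) (i j : n) :
    single i i a - single j j a ∈ lieClosure (offDiagSingles n R) := by
  rcases eq_or_ne i j with rfl | h
  · simp
  · simpa using mul_sub_mul_mem_lieClosure (single_mem_lieClosure_offDiagSingles h a)
      (single_mem_lieClosure_offDiagSingles h.symm 1)

theorem single_mul_sub_mul_mem_lieClosure_offDiagSingles {i j : n} (h : i ≠ j) (a b : R) :
    single i i (a * b - b * a) ∈ lieClosure (offDiagSingles n R) := by
  have hbracket := mul_sub_mul_mem_lieClosure (single_mem_lieClosure_offDiagSingles h a)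
    (single_mem_lieClosure_offDiagSingles h.symm b)
  rw [single_mul_single_same, single_mul_single_same] at hbracket
  convert sub_mem hbracket (single_sub_single_mem_lieClosure_offDiagSingles (b * a) i j) using 1
  rw [sub_sub_sub_cancel_right]
  exact map_sub (singleAddMonoidHom i i) _ _

theorem sub_single_trace_mem_lieClosure_offDiagSingles (x : Matrix n n R) (i₀ : n) :
    x - single i₀ i₀ x.trace ∈ lieClosure (offDiagSingles n R) := by
  have hx : x - single i₀ i₀ x.trace = ∑ i, ∑ j,
      (single i j (x i j) - if i = j then single i₀ i₀ (x i i) else 0) := by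
    simp only [Finset.sum_sub_distrib, Finset.sum_ite_eq, Finset.mem_univ, if_true]
    rw [← matrix_eq_sum_single x]
    exact congrArg _ (map_sum (singleAddMonoidHom i₀ i₀) _ _)
  rw [hx]
  refine sum_mem fun i _ => sum_mem fun j _ => ?_
  split_ifs with h
  · subst h
    exact single_sub_single_mem_lieClosure_offDiagSingles _ _ _
  · simpa using single_mem_lieClosure_offDiagSingles h _

end Ring

theorem single_mem_lieClosure_offDiagSingles_of_re_eq_zero {i j : n} (h : i ≠ j) {c : ℍ[ℝ]}
    (hc : c.re = 0) : single i i c ∈ lieClosure (offDiagSingles n ℍ[ℝ]) := by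
  have hle : AddSubgroup.closure {z : ℍ[ℝ] | ∃ a b, z = a * b - b * a} ≤
      (lieClosure (offDiagSingles n ℍ[ℝ])).comap (singleAddMonoidHom i i) :=
    AddSubgroup.closure_le _ |>.2 fun _ ⟨a, b, hz⟩ =>
      hz ▸ single_mul_sub_mul_mem_lieClosure_offDiagSingles h a b
  exact hle (Quaternion.mem_closure_commutators_of_re_eq_zero hc)

theorem re_trace_eq_zero_of_mem_lieClosure_offDiagSingles {R : Type*} [CommRing R]
    {x : Matrix n n ℍ[R]} (hx : x ∈ lieClosure (offDiagSingles n ℍ[R])) : x.trace.re = 0 := by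
  refine lieClosure_induction (p := fun x : Matrix n n ℍ[R] => x.trace.re = 0) ?_ (by simp)
    (fun x y hx hy => by simp [hx, hy]) (fun x hx => by simp [hx]) (fun x y _ _ => ?_) hx
  · rintro _ ⟨a, i, j, h, rfl⟩
    simp [trace_single_eq_of_ne _ _ _ h]
  · rw [trace_sub, Quaternion.re_sub, Quaternion.re_trace_mul_comm, sub_self]

theorem coe_lieClosure_offDiagSingles_quaternion [Nontrivial n] :
    (lieClosure (offDiagSingles n ℍ[ℝ]) : Set (Matrix n n ℍ[ℝ])) = {x | x.trace.re = 0} := by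
  ext x
  constructor
  · exact re_trace_eq_zero_of_mem_lieClosure_offDiagSingles
  · intro hx
    obtain ⟨i, j, h⟩ := exists_pair_ne n
    rw [SetLike.mem_coe, ← sub_add_cancel x (single i i x.trace)]
    exact add_mem (sub_single_trace_mem_lieClosure_offDiagSingles x i)
      (single_mem_lieClosure_offDiagSingles_of_re_eq_zero h hx)

end Matrix

theorem sl_quaternion_eq_trace_imaginary
    {m : ℕ} (hm : 2 ≤ m) :
    (lieClosure {x : Matrix (Fin m) (Fin m) ℍ[ℝ] |
        ∃ (a : ℍ[ℝ]) (i j : Fin m), i ≠ j ∧ x = Matrix.single i j a} :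
      Set (Matrix (Fin m) (Fin m) ℍ[ℝ])) =
    {x : Matrix (Fin m) (Fin m) ℍ[ℝ] | x.trace.re = 0} := by
  have : Nontrivial (Fin m) := Fin.nontrivial_iff_two_le.2 hm
  exact Matrix.coe_lieClosure_offDiagSingles_quaternion
end

section
/- Let G be the subgroup of the group of units of the matrix ring M_2(ℍ) generated by all transvections I + a·E_{ij} with a ∈ ℍ and i ≠ j. For a hermitian matrix x ∈ M_2(ℍ) (i.e., x equals its quaternionic conjugate transpose xᴴ, so that x₁₁ and x₂₂ are real), define q(x) = re(x₁₁)·re(x₂₂) − re(x₁₂ · conj(x₁₂)). Then for every y ∈ G and every hermitian x ∈ M_2(ℍ), the matrix y x yᴴ is hermitian and q(y x yᴴ) = q(x). -/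
/-!
A hermitian `x = !![r, p; p̄, s]` has `q(x) = r s - |p|²`, a quaternionic determinant. For the
upper transvection `t = !![1, a; 0, 1]` one finds `t x tᴴ = !![r + 2 re(p ā) + s|a|², p + a s; _, s]`,
and expanding `|p + a s|²` shows that `q` is unchanged; the lower transvection is symmetric. The
congruences preserving `q` on hermitian matrices form a subgroup, which therefore contains the
group generated by the transvections.
-/

open scoped Matrix Quaternion

/-- The quadratic form `q(x) = re(x₁₁)·re(x₂₂) − re(x₁₂ · conj(x₁₂))` on 2×2 quaternionic
matrices (intended for hermitian ones). -/
noncomputable def hermQuadForm (x : Matrix (Fin 2) (Fin 2) ℍ[ℝ]) : ℝ :=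
  (x 0 0).re * (x 1 1).re - (x 0 1 * star (x 0 1)).re

open Matrix Quaternion

namespace Matrix

variable {n R β : Type*} [Fintype n] [Semiring R] [StarRing R]

theorem mul_mul_conjTranspose_mul (u v x : Matrix n n R) :
    u * v * x * (u * v)ᴴ = u * (v * x * vᴴ) * uᴴ := by
  simp only [conjTranspose_mul, Matrix.mul_assoc]

variable [DecidableEq n]

def congruenceStabilizer (f : Matrix n n R → β) : Subgroup (Matrix n n R)ˣ where
  carrier := {u | ∀ x : Matrix n n R, x.IsHermitian → f (u * x * (u : Matrix n n R)ᴴ) = f x}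
  one_mem' := by simp
  mul_mem' {u v} hu hv x hx := by
    rw [Units.val_mul, mul_mul_conjTranspose_mul,
      hu _ (isHermitian_mul_mul_conjTranspose _ hx), hv x hx]
  inv_mem' {u} hu x hx := by
    have h := hu _ (isHermitian_mul_mul_conjTranspose (↑u⁻¹ : Matrix n n R) hx)
    rwa [← mul_mul_conjTranspose_mul, u.mul_inv, Matrix.one_mul, conjTranspose_one,
      Matrix.mul_one, eq_comm] at h

section FinTwo

variable {α : Type*} [Semiring α]

theorem one_add_single_zero_one (a : α) :
    (1 + single 0 1 a : Matrix (Fin 2) (Fin 2) α) = !![1, a; 0, 1] := by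
  ext i j
  fin_cases i <;> fin_cases j <;> simp [single]

theorem one_add_single_one_zero (a : α) :
    (1 + single 1 0 a : Matrix (Fin 2) (Fin 2) α) = !![1, 0; a, 1] := by
  ext i j
  fin_cases i <;> fin_cases j <;> simp [single]

end FinTwo

end Matrix

theorem Matrix.IsHermitian.eta_fin_two_quaternion {R : Type*} [CommRing R] [NoZeroDivisors R]
    [CharZero R] {x : Matrix (Fin 2) (Fin 2) ℍ[R]} (hx : x.IsHermitian) :
    x = !![((x 0 0).re : ℍ[R]), x 0 1; star (x 0 1), ((x 1 1).re : ℍ[R])] := by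
  have h_diag : ∀ i, x i i = ((x i i).re : ℍ[R]) := fun i =>
    Quaternion.star_eq_self.mp (by simpa using congrFun (congrFun hx.eq i) i)
  have h_10 : x 1 0 = star (x 0 1) := by simpa using (congrFun (congrFun hx.eq 1) 0).symm
  refine Matrix.ext fun i j => ?_
  fin_cases i <;> fin_cases j
  exacts [h_diag 0, rfl, h_10, h_diag 1]

theorem hermQuadForm_of (a b c d : ℍ[ℝ]) :
    hermQuadForm !![a, b; c, d] = a.re * d.re - normSq b := rfl

theorem hermQuadForm_upper_congr (a : ℍ[ℝ]) {x : Matrix (Fin 2) (Fin 2) ℍ[ℝ]}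
    (hx : x.IsHermitian) :
    hermQuadForm (!![1, a; 0, 1] * x * !![1, 0; star a, 1]) = hermQuadForm x := by
  rw [hx.eta_fin_two_quaternion]
  simp only [mul_fin_two, hermQuadForm_of, one_mul, mul_one, zero_mul, mul_zero, add_zero,
    zero_add, normSq_def', re_add, re_mul, re_coe, re_star, imI_add, imI_mul, imI_coe,
    imI_star, imJ_add, imJ_mul, imJ_coe, imJ_star, imK_add, imK_mul, imK_coe, imK_star, mul_neg,
    sub_zero, sub_neg_eq_add, sub_self]
  ring

theorem hermQuadForm_lower_congr (a : ℍ[ℝ]) {x : Matrix (Fin 2) (Fin 2) ℍ[ℝ]}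
    (hx : x.IsHermitian) :
    hermQuadForm (!![1, 0; a, 1] * x * !![1, star a; 0, 1]) = hermQuadForm x := by
  rw [hx.eta_fin_two_quaternion]
  simp only [mul_fin_two, hermQuadForm_of, one_mul, mul_one, zero_mul, mul_zero, add_zero,
    zero_add, normSq_def', re_add, re_mul, re_coe, re_star, imI_add, imI_mul, imI_coe,
    imI_star, imJ_add, imJ_mul, imJ_coe, imJ_star, imK_add, imK_mul, imK_coe, imK_star, mul_neg,
    neg_zero, sub_zero, sub_neg_eq_add, sub_self]
  ring

theorem hermQuadForm_transvection_congr {i j : Fin 2} (hij : i ≠ j) (a : ℍ[ℝ])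
    {x : Matrix (Fin 2) (Fin 2) ℍ[ℝ]} (hx : x.IsHermitian) :
    hermQuadForm ((1 + single i j a) * x * (1 + single i j a)ᴴ) = hermQuadForm x := by
  rw [conjTranspose_add, conjTranspose_one, conjTranspose_single]
  fin_cases i <;> fin_cases j <;> simp only [ne_eq, not_true_eq_false] at hij
  · simpa [one_add_single_zero_one, one_add_single_one_zero] using hermQuadForm_upper_congr a hx
  · simpa [one_add_single_zero_one, one_add_single_one_zero] using hermQuadForm_lower_congr a hx

theorem transvection_group_action_preserves_hermitian_and_form :
    ∀ y ∈ Subgroup.closure {u : (Matrix (Fin 2) (Fin 2) ℍ[ℝ])ˣ |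
        ∃ (a : ℍ[ℝ]) (i j : Fin 2), i ≠ j ∧
          u.val = 1 + Matrix.single i j a},
      ∀ x : Matrix (Fin 2) (Fin 2) ℍ[ℝ], x.IsHermitian →
        (y.val * x * y.valᴴ).IsHermitian ∧
        hermQuadForm (y.val * x * y.valᴴ) = hermQuadForm x := by
  intro y hy x hx
  refine ⟨isHermitian_mul_mul_conjTranspose _ hx, ?_⟩
  suffices h_le : Subgroup.closure _ ≤ congruenceStabilizer hermQuadForm from h_le hy x hx
  rw [Subgroup.closure_le]
  rintro u ⟨a, i, j, hij, hu⟩ z hz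
  rw [hu]
  exact hermQuadForm_transvection_congr hij a hz
end

section
/- Let y ∈ M_2(ℍ). If y x yᴴ = x for every hermitian matrix x ∈ M_2(ℍ), then y = I or y = −I. -/
/-!
Conjugating the hermitian matrix unit `E_ii` by `y` gives the matrix with entries
`y k i * star (y l i)`, so every off-diagonal entry `a` of `y` satisfies `a * star a = 0`, and `y`
is diagonal. For a diagonal `y = diag d`, the hermitian matrices `q E_ij + star q E_ji` give
`d i * q * star (d j) = q` for `i ≠ j` and every quaternion `q`. With `q = 1` and
`d i * star (d i) = 1` this forces all `d i` to be one unit `c` with `c q c⁻¹ = q`. So `c` is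
central in `ℍ`, hence real, and `c ^ 2 = 1`.
-/

open scoped Matrix Quaternion

theorem Quaternion.eq_coe_re_of_forall_commute {a : ℍ[ℝ]} (h : ∀ q : ℍ[ℝ], Commute a q) :
    a = (a.re : ℍ[ℝ]) := by
  have hcomm q := Quaternion.ext_iff.mp (h q).eq
  simp only [Quaternion.re_mul, Quaternion.imI_mul, Quaternion.imJ_mul, Quaternion.imK_mul] at hcomm
  have hi := hcomm ⟨0, 1, 0, 0⟩
  have hj := hcomm ⟨0, 0, 1, 0⟩
  simp at hi hj
  apply Quaternion.ext <;> simp <;> linarith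

theorem IsSelfAdjoint.isHermitian_single {n R : Type*} [DecidableEq n] [AddMonoid R]
    [StarAddMonoid R] {c : R} (hc : IsSelfAdjoint c) (i : n) :
    (Matrix.single i i c).IsHermitian := by
  simp [Matrix.IsHermitian, Matrix.conjTranspose_single, hc.star_eq]

namespace Matrix

variable {n R : Type*} [DecidableEq n]

section Semiring

variable [Fintype n] [Semiring R] [StarRing R]

theorem mul_single_mul_conjTranspose_apply (y : Matrix n n R) (i j k l : n) (c : R) :
    (y * single i j c * yᴴ) k l = y k i * c * star (y l j) := by
  rw [mul_apply, Finset.sum_eq_single j (fun m _ hm => by simp [hm]) (by simp)]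
  simp

theorem diagonal_mul_mul_conjTranspose_diagonal_apply (d : n → R) (x : Matrix n n R) (i j : n) :
    (diagonal d * x * (diagonal d)ᴴ) i j = d i * x i j * star (d j) := by
  simp [diagonal_conjTranspose]

theorem isDiag_of_forall_isHermitian_conj_eq [NoZeroDivisors R] {y : Matrix n n R}
    (hy : ∀ x : Matrix n n R, x.IsHermitian → y * x * yᴴ = x) : y.IsDiag := by
  intro k i hki
  have hkk := congr_fun₂ (hy _ ((IsSelfAdjoint.one R).isHermitian_single i)) k k
  rw [mul_single_mul_conjTranspose_apply, mul_one, single_apply_of_row_ne hki.symm] at hkk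
  simpa using hkk

end Semiring

section DivisionRing

variable [Fintype n] [DivisionRing R] [StarRing R]

theorem exists_eq_diagonal_const_of_forall_isHermitian_conj_eq [Nontrivial n] {y : Matrix n n R}
    (hy : ∀ x : Matrix n n R, x.IsHermitian → y * x * yᴴ = x) :
    ∃ c : R, (∀ q, Commute c q) ∧ c * star c = 1 ∧ y = diagonal fun _ => c := by
  obtain ⟨d, rfl⟩ : ∃ d, y = diagonal d :=
    ⟨y.diag, (isDiag_of_forall_isHermitian_conj_eq hy).diagonal_diag.symm⟩
  have hd (x : Matrix n n R) (hx : x.IsHermitian) i j : d i * x i j * star (d j) = x i j := by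
    rw [← diagonal_mul_mul_conjTranspose_diagonal_apply, hy x hx]
  have hunit i : d i * star (d i) = 1 := by simpa using hd 1 isHermitian_one i i
  have hoff {i j} (hij : i ≠ j) q : d i * q * star (d j) = q := by
    simpa [conjTranspose_single, single_apply_of_row_ne hij.symm] using
      hd _ (isHermitian_add_transpose_self (single i j q)) i j
  have hconst {i j} (hij : i ≠ j) : d i = d j := by
    have hi0 : d i ≠ 0 := left_ne_zero_of_mul_eq_one (hunit i)
    have hstar : star (d i) = star (d j) :=
      mul_left_cancel₀ hi0 (by rw [hunit i]; simpa using (hoff hij 1).symm)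
    exact star_injective hstar
  obtain ⟨i, j, hij⟩ := exists_pair_ne n
  refine ⟨d i, fun q => ?_, hunit i, ?_⟩
  · have hconj : d i * q * star (d i) = q := by simpa [hconst hij] using hoff hij q
    calc d i * q = d i * q * (star (d i) * d i) := by rw [mul_eq_one_comm.mp (hunit i), mul_one]
      _ = q * d i := by rw [← mul_assoc, hconj]
  · congr 1
    funext k
    obtain rfl | hki := eq_or_ne k i
    · rfl
    · exact hconst hki

end DivisionRing

end Matrix

theorem trivial_action_on_hermitian_quaternion_matrices
    (y : Matrix (Fin 2) (Fin 2) ℍ[ℝ])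
    (h : ∀ x : Matrix (Fin 2) (Fin 2) ℍ[ℝ], x.IsHermitian → y * x * yᴴ = x) :
    y = 1 ∨ y = -1 := by
  obtain ⟨c, hc_central, hc_unitary, rfl⟩ :=
    Matrix.exists_eq_diagonal_const_of_forall_isHermitian_conj_eq h
  obtain ⟨r, rfl⟩ : ∃ r : ℝ, c = r :=
    ⟨c.re, Quaternion.eq_coe_re_of_forall_commute hc_central⟩
  have hr : r * r = 1 := Quaternion.coe_injective (by simpa using hc_unitary)
  rcases mul_self_eq_one_iff.mp hr with rfl | rfl
  · left; simp
  · right; simp [← Matrix.diagonal_one, ← Matrix.diagonal_neg]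
end
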